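/- arXiv:2103.09333 — 2 statements merged into one kernel-verified Lean document; each statement's English description precedes it below -/
import Mathlib

section
/- For every zigzag language L_n ⊆ S_n, the sequence J(L_n) contains every permutation of L_n exactly once; in particular, J(L_n) has length |L_n|. -/
/-!
Shared definitions: permutations in one-line notation as lists of naturals,
deletion `p`, insertion `c_i`, zigzag languages, the Gray code sequence `J(L_n)`,
jumps, minimal jumps, the auxiliary sequences `s_n^π`, Algorithm M,
vincular pattern containment and 2-clumped permutations.
-/

/-- `S_n`: permutations of `{1,…,n}` in one-line notation, as lists of naturals. -/
def SymmList (n : ℕ) : Set (List ℕ) := {l | List.Perm l (List.range' 1 n)}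

/-- The identity permutation `id_n = 1 2 ⋯ n`. -/
def idPerm (n : ℕ) : List ℕ := List.range' 1 n

/-- `p(π)`: delete the largest entry `n = π.length` from the permutation `π ∈ S_n`. -/
def pdel (l : List ℕ) : List ℕ := l.erase l.length

/-- `c_i(π)`: insert the new largest value `π.length + 1` at (1-indexed) position `i`. -/
def cins (i : ℕ) (l : List ℕ) : List ℕ :=
  l.take (i - 1) ++ (l.length + 1) :: l.drop (i - 1)

/-- Zigzag languages of permutations: `L_0 = {ε}` is a zigzag language, and
`L ⊆ S_{n+1}` is a zigzag language if `p(L)` is a zigzag language and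
`c_1(π), c_{n+1}(π) ∈ L` for every `π ∈ p(L)`. -/
inductive IsZigzag : ℕ → Set (List ℕ) → Prop
  | zero : IsZigzag 0 {[]}
  | succ (n : ℕ) (L : Set (List ℕ)) :
      L ⊆ SymmList (n + 1) →
      IsZigzag n (pdel '' L) →
      (∀ l ∈ pdel '' L, cins 1 l ∈ L ∧ cins (n + 1) l ∈ L) →
      IsZigzag (n + 1) L

/-- `→c(π)`: the sequence of those `c_1(π),…,c_n(π)` lying in `L`,
in increasing order of the insertion position. -/
noncomputable def cSeq (L : Set (List ℕ)) (n : ℕ) (l : List ℕ) : List (List ℕ) :=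
  ((List.range' 1 n).map (fun i => cins i l)).filter
    (fun x => @decide (x ∈ L) (Classical.propDecidable _))

/-- The Gray code sequence `J(L_n)` of a language `L ⊆ S_n`:
`J(L_0) = ε`, and `J(L_{n+1})` is obtained from `J(L_n)` (for the language
`p(L)`) by replacing its entries alternately by `←c(π)` (the reverse of
`→c(π)`) and `→c(π)`. -/
noncomputable def Jseq : ℕ → Set (List ℕ) → List (List ℕ)
  | 0, _ => [[]]
  | (n + 1), L =>
      (((Jseq n (pdel '' L)).mapIdx
        (fun k π => if k % 2 = 0 then (cSeq L (n + 1) π).reverse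
                    else cSeq L (n + 1) π)).flatten)

/-- `ρ` is obtained from `π` by a right jump of the value `v` by `d` steps. -/
def RightJump (π ρ : List ℕ) (v d : ℕ) : Prop :=
  0 < d ∧ ∃ A B C : List ℕ, B.length = d ∧ (∀ x ∈ B, x < v) ∧
    π = A ++ v :: (B ++ C) ∧ ρ = A ++ (B ++ v :: C)

/-- `ρ` is obtained from `π` by a left jump of the value `v` by `d` steps. -/
def LeftJump (π ρ : List ℕ) (v d : ℕ) : Prop := RightJump ρ π v d

/-- A right jump that is minimal with respect to `L`: every right jump of the
same value by fewer steps yields a permutation not in `L`. -/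
def MinimalRightJump (L : Set (List ℕ)) (π ρ : List ℕ) (v d : ℕ) : Prop :=
  RightJump π ρ v d ∧ ∀ d' ρ', d' < d → RightJump π ρ' v d' → ρ' ∉ L

/-- A left jump that is minimal with respect to `L`. -/
def MinimalLeftJump (L : Set (List ℕ)) (π ρ : List ℕ) (v d : ℕ) : Prop :=
  LeftJump π ρ v d ∧ ∀ d' ρ', d' < d → LeftJump π ρ' v d' → ρ' ∉ L

/-- The auxiliary sequence `s_n^π` of a permutation `π` occurring in `J(L_n)`,
as a function of the index `i ∈ {1,…,n}` (value `0` outside this range). -/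
noncomputable def sVec : ℕ → Set (List ℕ) → List ℕ → ℕ → ℕ
  | 0, _, _, _ => 0
  | 1, _, _, i => if i = 1 then 1 else 0
  | (n + 2), L, π, i =>
      let L' := pdel '' L
      let π' := pdel π
      let cbar := if ((Jseq (n + 1) L').idxOf π') % 2 = 0
                  then (cSeq L (n + 2) π').reverse else cSeq L (n + 2) π'
      if cbar.getLast? = some π then
        (if i ≤ n then sVec (n + 1) L' π' i
         else if i = n + 1 then n + 1
         else if i = n + 2 then sVec (n + 1) L' π' (n + 1) else 0)
      else
        (if i ≤ n + 1 then sVec (n + 1) L' π' i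
         else if i = n + 2 then n + 2 else 0)

/-- `j` is at the first position of `l`, or the entry immediately left of `j`
in `l` is larger than `j`. -/
def AtLeftTurn (l : List ℕ) (j : ℕ) : Prop :=
  ∃ A B : List ℕ, l = A ++ j :: B ∧ (A = [] ∨ ∃ x, A.getLast? = some x ∧ j < x)

/-- `j` is at the last position of `l`, or the entry immediately right of `j`
in `l` is larger than `j`. -/
def AtRightTurn (l : List ℕ) (j : ℕ) : Prop :=
  ∃ A B : List ℕ, l = A ++ j :: B ∧ (B = [] ∨ ∃ x, B.head? = some x ∧ j < x)

/-- `j` is not at the first position of `l`, and the entry immediately left of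
`j` in `l` is smaller than `j`. -/
def SmallerLeftNeighbor (l : List ℕ) (j : ℕ) : Prop :=
  ∃ A B : List ℕ, ∃ x, l = A ++ j :: B ∧ A.getLast? = some x ∧ x < j

/-- `j` is not at the last position of `l`, and the entry immediately right of
`j` in `l` is smaller than `j`. -/
def SmallerRightNeighbor (l : List ℕ) (j : ℕ) : Prop :=
  ∃ A B : List ℕ, ∃ x, l = A ++ j :: B ∧ B.head? = some x ∧ x < j

/-- A state of Algorithm M: the current permutation `π` and the auxiliary
arrays `o` and `s`; `o j = false` encodes direction `L` (left) and
`o j = true` encodes `R` (right). -/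
structure MState where
  perm : List ℕ
  o : ℕ → Bool
  s : ℕ → ℕ

/-- The initial state of Algorithm M (step M1): `π = id_n`, `o_j = L`, `s_j = j`. -/
def MInit (n : ℕ) : MState := ⟨idPerm n, fun _ => false, fun j => j⟩

/-- One iteration (steps M3–M5) of Algorithm M on a language `L ⊆ S_n`:
with `j := s_n ≠ 1`, the permutation jumps minimally in the direction `o_j`
(step M4), and the arrays `o`, `s` are updated as in step M5. -/
def MStep (L : Set (List ℕ)) (n : ℕ) (σ σ' : MState) : Prop :=
  σ.s n ≠ 1 ∧
  σ'.perm ∈ L ∧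
  ((σ.o (σ.s n) = false ∧ ∃ d, MinimalLeftJump L σ.perm σ'.perm (σ.s n) d) ∨
   (σ.o (σ.s n) = true ∧ ∃ d, MinimalRightJump L σ.perm σ'.perm (σ.s n) d)) ∧
  (((σ.o (σ.s n) = false ∧ AtLeftTurn σ'.perm (σ.s n)) ∨
    (σ.o (σ.s n) = true ∧ AtRightTurn σ'.perm (σ.s n))) →
      σ'.o = Function.update σ.o (σ.s n) (!σ.o (σ.s n)) ∧
      σ'.s = Function.update (Function.update (Function.update σ.s n n) (σ.s n)
               ((Function.update σ.s n n) (σ.s n - 1))) (σ.s n - 1) (σ.s n - 1)) ∧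
  (¬ ((σ.o (σ.s n) = false ∧ AtLeftTurn σ'.perm (σ.s n)) ∨
      (σ.o (σ.s n) = true ∧ AtRightTurn σ'.perm (σ.s n))) →
      σ'.o = σ.o ∧ σ'.s = Function.update σ.s n n)

/-- `π` contains the vincular pattern `pat` whose marked adjacent pair starts
at (0-indexed) position `k` of `pat`. -/
def ContainsVincular (π pat : List ℕ) (k : ℕ) : Prop :=
  ∃ f : ℕ → ℕ, StrictMonoOn f (Set.Iio pat.length) ∧
    (∀ i < pat.length, f i < π.length) ∧
    f (k + 1) = f k + 1 ∧
    (∀ i < pat.length, ∀ j < pat.length,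
      (pat.getD i 0 < pat.getD j 0 ↔ π.getD (f i) 0 < π.getD (f j) 0))

/-- 2-clumped permutations: those avoiding the vincular patterns
`3(51)24`, `3(51)42`, `24(51)3` and `42(51)3`. -/
def TwoClumped (π : List ℕ) : Prop :=
  ¬ ContainsVincular π [3, 5, 1, 2, 4] 1 ∧ ¬ ContainsVincular π [3, 5, 1, 4, 2] 1 ∧
  ¬ ContainsVincular π [2, 4, 5, 1, 3] 2 ∧ ¬ ContainsVincular π [4, 2, 5, 1, 3] 2

/-- `S'_n`: the set of 2-clumped permutations in `S_n`. -/
def SClump (n : ℕ) : Set (List ℕ) := {l ∈ SymmList n | TwoClumped l}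

/-- `B_n`: the permutations obtained from `1` by repeatedly inserting the new
largest value at the first or the last position. -/
def Bset : ℕ → Set (List ℕ)
  | 0 => {[]}
  | 1 => {[1]}
  | (n + 2) => {l | ∃ π ∈ Bset (n + 1), l = cins 1 π ∨ l = cins (n + 2) π}


/-!
Up to reordering within blocks, `J(L_{n+1})` is the concatenation, over `π` in `J(L_n)`, of
the children `c_i(π)` lying in `L_{n+1}`. Within a block the children are distinct because the
new maximum sits at a different position in each; blocks of distinct parents are disjoint
because `p` recovers the parent; and every `σ ∈ L_{n+1}` is a child of `p(σ) ∈ L_n`. Hence, by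
induction on `n`, `J(L_n)` lists the elements of `L_n` without repetition.
-/

open List

lemma length_of_mem_symmList {n : ℕ} {l : List ℕ} (h : l ∈ SymmList n) : l.length = n := by
  simpa using h.length_eq

lemma nodup_of_mem_symmList {n : ℕ} {l : List ℕ} (h : l ∈ SymmList n) : l.Nodup :=
  h.nodup_iff.mpr (nodup_range' _)

lemma length_mem_of_mem_symmList {n : ℕ} {l : List ℕ} (h : l ∈ SymmList (n + 1)) :
    l.length ∈ l := by
  rw [length_of_mem_symmList h, h.mem_iff, mem_range'_1]
  omega

lemma length_cins (i : ℕ) (l : List ℕ) : (cins i l).length = l.length + 1 := by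
  simp only [cins, length_append, length_take, length_cons, length_drop]
  omega

lemma pdel_cins {l : List ℕ} (h : l.length + 1 ∉ l) (i : ℕ) : pdel (cins i l) = l := by
  have ht : l.length + 1 ∉ l.take (i - 1) := fun hm => h (mem_of_mem_take hm)
  rw [pdel, length_cins, cins, erase_append_right _ ht, erase_cons_head, take_append_drop]

lemma idxOf_cins {l : List ℕ} (h : l.length + 1 ∉ l) {i : ℕ} (hi : i ≤ l.length + 1) :
    (cins i l).idxOf (l.length + 1) = i - 1 := by
  have ht : l.length + 1 ∉ l.take (i - 1) := fun hm => h (mem_of_mem_take hm)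
  rw [cins, idxOf_append_of_notMem ht, idxOf_cons_self, length_take]
  omega

lemma length_pdel {l : List ℕ} (hl : l.length ∈ l) : (pdel l).length + 1 = l.length := by
  have := length_pos_of_mem hl
  rw [pdel, length_erase_of_mem hl]
  omega

lemma length_succ_notMem_pdel {l : List ℕ} (hnd : l.Nodup) (hl : l.length ∈ l) :
    (pdel l).length + 1 ∉ pdel l := by
  rw [length_pdel hl]
  exact hnd.not_mem_erase

lemma exists_cins_pdel_eq {l : List ℕ} (hl : l.length ∈ l) :
    ∃ i ∈ range' 1 l.length, cins i (pdel l) = l := by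
  obtain ⟨A, B, -, hAB, herase⟩ := exists_erase_eq hl
  have hlen : l.length = A.length + B.length + 1 := by
    simpa [← add_assoc] using congrArg length hAB
  refine ⟨A.length + 1, mem_range'_1.mpr (by omega), ?_⟩
  have hnew : (A ++ B).length + 1 = l.length := by simp [hlen]
  rw [pdel, herase, cins, Nat.add_sub_cancel, take_left' rfl, drop_left' rfl, hnew, ← hAB]

lemma nodup_cSeq (L : Set (List ℕ)) {π : List ℕ} (h : π.length + 1 ∉ π) :
    (cSeq L (π.length + 1) π).Nodup := by
  refine ((nodup_range' _).map_on fun i hi j hj hij => ?_).filter _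
  have := congrArg (idxOf (π.length + 1)) hij
  rw [mem_range'_1] at hi hj
  rw [idxOf_cins h (by omega), idxOf_cins h (by omega)] at this
  omega

lemma mem_cSeq_iff {L : Set (List ℕ)} {π x : List ℕ} (hL : L ⊆ SymmList (π.length + 1))
    (hπ : π.length + 1 ∉ π) : x ∈ cSeq L (π.length + 1) π ↔ x ∈ L ∧ pdel x = π := by
  classical
  simp only [cSeq, mem_filter, mem_map, decide_eq_true_eq]
  constructor
  · rintro ⟨⟨i, -, rfl⟩, hx⟩
    exact ⟨hx, pdel_cins hπ i⟩
  · rintro ⟨hx, rfl⟩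
    have hx' := hL hx
    rw [← length_of_mem_symmList hx']
    exact ⟨exists_cins_pdel_eq (length_mem_of_mem_symmList hx'), hx⟩

lemma length_pdel_of_mem_symmList {n : ℕ} {l : List ℕ} (h : l ∈ SymmList (n + 1)) :
    (pdel l).length = n := by
  have := length_pdel (length_mem_of_mem_symmList h)
  rw [length_of_mem_symmList h] at this
  omega

lemma mem_cSeq_pdel_iff {n : ℕ} {L : Set (List ℕ)} (hL : L ⊆ SymmList (n + 1))
    {x y : List ℕ} (hy : y ∈ L) :
    x ∈ cSeq L (n + 1) (pdel y) ↔ x ∈ L ∧ pdel x = pdel y := by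
  have hπ := length_succ_notMem_pdel (nodup_of_mem_symmList (hL hy))
    (length_mem_of_mem_symmList (hL hy))
  obtain rfl := length_pdel_of_mem_symmList (hL hy)
  exact mem_cSeq_iff hL hπ

lemma nodup_cSeq_pdel {n : ℕ} {L : Set (List ℕ)} (hL : L ⊆ SymmList (n + 1)) {y : List ℕ}
    (hy : y ∈ L) : (cSeq L (n + 1) (pdel y)).Nodup := by
  have hπ := length_succ_notMem_pdel (nodup_of_mem_symmList (hL hy))
    (length_mem_of_mem_symmList (hL hy))
  obtain rfl := length_pdel_of_mem_symmList (hL hy)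
  exact nodup_cSeq L hπ

lemma flatten_mapIdx_perm_flatMap {α β : Type*} {f : ℕ → α → List β} {g : α → List β}
    (h : ∀ k a, f k a ~ g a) (l : List α) : (l.mapIdx f).flatten ~ l.flatMap g := by
  induction l generalizing f with
  | nil => simp
  | cons a l ih =>
    rw [mapIdx_cons, flatten_cons, flatMap_cons]
    exact (h 0 a).append (ih fun k => h (k + 1))

lemma Jseq_succ_perm (n : ℕ) (L : Set (List ℕ)) :
    Jseq (n + 1) L ~ (Jseq n (pdel '' L)).flatMap (cSeq L (n + 1)) := by
  rw [Jseq]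
  refine flatten_mapIdx_perm_flatMap (fun k π => ?_) _
  split
  · exact reverse_perm _
  · exact Perm.refl _

theorem IsZigzag.nodup_Jseq_and_mem_iff {n : ℕ} {L : Set (List ℕ)} (hL : IsZigzag n L) :
    (Jseq n L).Nodup ∧ ∀ x, x ∈ Jseq n L ↔ x ∈ L := by
  induction hL with
  | zero => simp [Jseq]
  | succ n L hsub _ _ ih =>
    obtain ⟨ihnd, ihmem⟩ := ih
    have hparent : ∀ π ∈ Jseq n (pdel '' L), ∃ y ∈ L, pdel y = π := fun π => (ihmem π).1
    rw [(Jseq_succ_perm n L).nodup_iff, nodup_flatMap]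
    refine ⟨⟨fun π hπ => ?_, ihnd.pairwise_of_forall_ne fun π hπ π' hπ' hne => ?_⟩,
      fun x => ?_⟩
    · obtain ⟨y, hy, rfl⟩ := hparent π hπ
      exact nodup_cSeq_pdel hsub hy
    · obtain ⟨y, hy, rfl⟩ := hparent π hπ
      obtain ⟨y', hy', rfl⟩ := hparent π' hπ'
      intro x hx hx'
      rw [mem_cSeq_pdel_iff hsub hy] at hx
      rw [mem_cSeq_pdel_iff hsub hy'] at hx'
      exact hne (hx.2.symm.trans hx'.2)
    · rw [(Jseq_succ_perm n L).mem_iff, mem_flatMap]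
      constructor
      · rintro ⟨π, hπ, hx⟩
        obtain ⟨y, hy, rfl⟩ := hparent π hπ
        exact ((mem_cSeq_pdel_iff hsub hy).1 hx).1
      · intro hx
        exact ⟨pdel x, (ihmem _).2 (Set.mem_image_of_mem _ hx),
          (mem_cSeq_pdel_iff hsub hx).2 ⟨hx, rfl⟩⟩

/-- For every zigzag language `L_n ⊆ S_n`, the sequence `J(L_n)`
contains every permutation of `L_n` exactly once; in particular, `J(L_n)` has
length `|L_n|`. -/
theorem Jseq_visits_each_exactly_once (n : ℕ) (L : Set (List ℕ)) (hL : IsZigzag n L) :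
    (∀ π ∈ L, (Jseq n L).count π = 1) ∧ (Jseq n L).length = L.ncard := by
  obtain ⟨hnd, hmem⟩ := hL.nodup_Jseq_and_mem_iff
  refine ⟨fun π hπ => count_eq_one_of_mem hnd ((hmem π).2 hπ), ?_⟩
  have hL_eq : L = ↑(Jseq n L).toFinset := by
    ext x
    simp [hmem]
  rw [← toFinset_card_of_nodup hnd, ← Set.ncard_coe_finset, ← hL_eq]
end

section
/- For every zigzag language L_n ⊆ S_n with n ≥ 1, Algorithm M is well defined (in every execution of step M4 the prescribed minimal jump exists and produces a permutation of L_n), it terminates, and the permutations visited in step M2, in order, form exactly the sequence J(L_n); in particular, Algorithm M visits every permutation of L_n exactly once. -/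
set_option autoImplicit false

lemma List.isChain_cons_filter_range' (f : ℕ → Bool) {a s : ℕ} (ha : a < s)
    (hgap : ∀ r, a < r → r < s → f r = false) (n : ℕ) :
    (a :: (List.range' s n).filter f).IsChain
      (fun x y => x < y ∧ ∀ r, x < r → r < y → f r = false) := by
  induction n generalizing a s with
  | zero => exact List.isChain_singleton a
  | succ n ih =>
    rw [List.range'_succ, List.filter_cons]
    split_ifs with hs
    · exact List.isChain_cons_cons.2 ⟨⟨ha, hgap⟩, ih (lt_add_one s) (fun r h1 h2 => by omega)⟩
    · refine ih (by omega) fun r h1 h2 => ?_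
      rcases (show r < s ∨ r = s by omega) with hr | rfl
      exacts [hgap r h1 hr, by simpa using hs]

lemma List.IsChain.exists_rel_of_getLast?_ne {α : Type*} {R : α → α → Prop} {l : List α}
    (hl : l.IsChain R) {x : α} (hx : x ∈ l) (hlast : l.getLast? ≠ some x) : ∃ y, R x y := by
  obtain ⟨s, t, rfl⟩ := List.mem_iff_append.1 hx
  rcases t with _ | ⟨y, t⟩
  · exact absurd List.getLast?_concat hlast
  · exact ⟨y, List.isChain_pair.1 (hl.infix ⟨s, t, by simp⟩)⟩

section Permutations

variable {m : ℕ} {π : List ℕ}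

lemma length_eq_of_mem_symmList (h : π ∈ SymmList m) : π.length = m := by
  simpa using h.length_eq

lemma le_of_mem_symmList (h : π ∈ SymmList m) {x : ℕ} (hx : x ∈ π) : x ≤ m := by
  have := List.mem_range'_1.1 (h.mem_iff.1 hx)
  omega

lemma cins_one (π : List ℕ) : cins 1 π = (π.length + 1) :: π := by
  simp [cins]

lemma cins_length_succ (π : List ℕ) : cins (π.length + 1) π = π ++ [π.length + 1] := by
  simp [cins]

lemma cins_perm_cons (i : ℕ) (π : List ℕ) : (cins i π).Perm ((π.length + 1) :: π) := by
  simpa only [cins, List.take_append_drop] using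
    List.perm_middle (a := π.length + 1) (l₁ := π.take (i - 1)) (l₂ := π.drop (i - 1))

lemma length_add_one_notMem_of_mem_symmList (h : π ∈ SymmList m) : π.length + 1 ∉ π :=
  fun hx => by
    have := le_of_mem_symmList h hx
    rw [length_eq_of_mem_symmList h] at this
    omega

lemma pdel_cins_s3 (h : π ∈ SymmList m) (i : ℕ) : pdel (cins i π) = π := by
  have hlen : (cins i π).length = π.length + 1 := (cins_perm_cons i π).length_eq
  have hfresh : π.length + 1 ∉ π.take (i - 1) := fun hx =>
    length_add_one_notMem_of_mem_symmList h (List.mem_of_mem_take hx)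
  rw [pdel, hlen, cins, List.erase_append_right _ hfresh, List.erase_cons_head,
    List.take_append_drop]

lemma cins_eq_append_cons_iff {A B : List ℕ} {i : ℕ} (hπ : π.length + 1 ∉ π) :
    cins i π = A ++ (π.length + 1) :: B ↔ π.take (i - 1) = A ∧ π.drop (i - 1) = B := by
  rw [cins, List.append_cons_inj_of_notMem (fun h => hπ (List.mem_of_mem_take h))
    (fun h => hπ (List.mem_of_mem_drop h))]
  simp

end Permutations

lemma IsZigzag.subset_symmList {n : ℕ} {L : Set (List ℕ)} (hL : IsZigzag n L) :
    L ⊆ SymmList n := by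
  cases hL with
  | zero => rintro _ rfl; exact List.Perm.refl _
  | succ n L hsub _ _ => exact hsub

lemma IsZigzag.image_pdel {m : ℕ} {L : Set (List ℕ)} (hL : IsZigzag (m + 1) L) :
    IsZigzag m (pdel '' L) := by
  cases hL with
  | succ _ _ _ h _ => exact h

lemma IsZigzag.cins_mem {m : ℕ} {L : Set (List ℕ)} (hL : IsZigzag (m + 1) L) {π : List ℕ}
    (hπ : π ∈ pdel '' L) : cins 1 π ∈ L ∧ cins (m + 1) π ∈ L := by
  cases hL with
  | succ _ _ _ _ h => exact h π hπ

lemma IsZigzag.eq_singleton_nil {L : Set (List ℕ)} (hL : IsZigzag 0 L) : L = {[]} := by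
  cases hL
  rfl

lemma IsZigzag.one_mem {L : Set (List ℕ)} (hL : IsZigzag 1 L) : [1] ∈ L := by
  have h0 : pdel '' L = {[]} := hL.image_pdel.eq_singleton_nil
  simpa [cins] using (hL.cins_mem (π := []) (by rw [h0]; rfl)).1

section Jumps

variable {π ρ : List ℕ} {v w d : ℕ}

lemma RightJump.perm (h : RightJump π ρ v d) : ρ.Perm π := by
  obtain ⟨-, A, B, C, -, -, rfl, rfl⟩ := h
  exact (List.perm_middle.trans (List.Perm.cons _ (List.Perm.refl _))).append_left A

lemma RightJump.reverse (h : RightJump π ρ v d) : RightJump ρ.reverse π.reverse v d := by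
  obtain ⟨hd, A, B, C, rfl, hB, rfl, rfl⟩ := h
  exact ⟨hd, C.reverse, B.reverse, A.reverse, by simp, fun x hx => hB x (by simpa using hx),
    by simp, by simp⟩

lemma rightJump_reverse_iff : RightJump ρ.reverse π.reverse v d ↔ RightJump π ρ v d :=
  ⟨fun h => by simpa using h.reverse, RightJump.reverse⟩

lemma rightJump_cons_iff (hv : v < w) :
    RightJump (w :: π) ρ v d ↔ ∃ ρ₀, ρ = w :: ρ₀ ∧ RightJump π ρ₀ v d := by
  constructor
  · rintro ⟨hd, _ | ⟨a, A⟩, B, C, hB, hBv, hπ, rfl⟩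
    · simp only [List.nil_append, List.cons.injEq] at hπ
      omega
    · simp only [List.cons_append, List.cons.injEq] at hπ
      obtain ⟨rfl, rfl⟩ := hπ
      exact ⟨_, rfl, hd, A, B, C, hB, hBv, rfl, rfl⟩
  · rintro ⟨ρ₀, rfl, hd, A, B, C, hB, hBv, rfl, rfl⟩
    exact ⟨hd, w :: A, B, C, hB, hBv, rfl, rfl⟩

lemma rightJump_cons_right_iff (hv : v < w) :
    RightJump π (w :: ρ) v d ↔ ∃ π₀, π = w :: π₀ ∧ RightJump π₀ ρ v d := by
  constructor
  · rintro ⟨hd, _ | ⟨a, A⟩, B, C, hB, hBv, rfl, hρ⟩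
    · obtain _ | ⟨b, B⟩ := B
      · simp at hB; omega
      · simp only [List.nil_append, List.cons_append, List.cons.injEq] at hρ
        have := hBv b List.mem_cons_self
        omega
    · simp only [List.cons_append, List.cons.injEq] at hρ
      obtain ⟨rfl, rfl⟩ := hρ
      exact ⟨_, rfl, hd, A, B, C, hB, hBv, rfl, rfl⟩
  · rintro ⟨π₀, rfl, hd, A, B, C, hB, hBv, rfl, rfl⟩
    exact ⟨hd, w :: A, B, C, hB, hBv, rfl, rfl⟩

lemma rightJump_concat_iff (hv : v < w) :
    RightJump (π ++ [w]) ρ v d ↔ ∃ ρ₀, ρ = ρ₀ ++ [w] ∧ RightJump π ρ₀ v d := by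
  rw [← rightJump_reverse_iff, List.reverse_concat, rightJump_cons_right_iff hv]
  constructor
  · rintro ⟨ρ₀, hρ, hj⟩
    exact ⟨ρ₀.reverse, by simpa using congrArg List.reverse hρ, by simpa using hj.reverse⟩
  · rintro ⟨ρ₀, rfl, hj⟩
    exact ⟨ρ₀.reverse, by simp, hj.reverse⟩

lemma rightJump_concat_right_iff (hv : v < w) :
    RightJump π (ρ ++ [w]) v d ↔ ∃ π₀, π = π₀ ++ [w] ∧ RightJump π₀ ρ v d := by
  rw [← rightJump_reverse_iff, List.reverse_concat, rightJump_cons_iff hv]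
  constructor
  · rintro ⟨π₀, hπ, hj⟩
    exact ⟨π₀.reverse, by simpa using congrArg List.reverse hπ, by simpa using hj.reverse⟩
  · rintro ⟨π₀, rfl, hj⟩
    exact ⟨π₀.reverse, by simp, hj.reverse⟩

lemma cins_add {i : ℕ} (hi : 1 ≤ i) (d : ℕ) (π : List ℕ) :
    cins (i + d) π =
      π.take (i - 1) ++ ((π.drop (i - 1)).take d ++ (π.length + 1) :: (π.drop (i - 1)).drop d) := by
  rw [cins, show i + d - 1 = (i - 1) + d by omega, List.take_add, List.drop_drop,
    List.append_assoc]

variable {m i : ℕ}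

lemma rightJump_cins_iff (hπ : π ∈ SymmList m) (hi : 1 ≤ i) :
    RightJump (cins i π) ρ (m + 1) d ↔ 0 < d ∧ i + d ≤ m + 1 ∧ ρ = cins (i + d) π := by
  obtain rfl := length_eq_of_mem_symmList hπ
  have hfresh := length_add_one_notMem_of_mem_symmList hπ
  constructor
  · rintro ⟨hd, A, B, C, rfl, -, hsplit, rfl⟩
    obtain ⟨rfl, hBC⟩ := (cins_eq_append_cons_iff hfresh).1 hsplit
    have hlen := congrArg List.length hBC
    rw [List.length_drop, List.length_append] at hlen
    refine ⟨hd, by omega, ?_⟩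
    rw [cins_add hi, hBC, List.take_left', List.drop_left'] <;> rfl
  · rintro ⟨hd, hid, rfl⟩
    refine ⟨hd, π.take (i - 1), (π.drop (i - 1)).take d, (π.drop (i - 1)).drop d,
      by simp; omega, fun x hx => ?_, ?_, cins_add hi d π⟩
    · have := le_of_mem_symmList hπ (List.mem_of_mem_drop (List.mem_of_mem_take hx))
      omega
    · rw [List.take_append_drop]
      exact (cins_eq_append_cons_iff hfresh).2 ⟨rfl, rfl⟩

lemma leftJump_cins_iff (hπ : π ∈ SymmList m) (hi : 1 ≤ i) (hi' : i ≤ m + 1) :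
    LeftJump (cins i π) ρ (m + 1) d ↔ 0 < d ∧ d < i ∧ ρ = cins (i - d) π := by
  constructor
  · rintro ⟨hd, A, B, C, rfl, -, rfl, hsplit⟩
    obtain rfl := length_eq_of_mem_symmList hπ
    have hfresh := length_add_one_notMem_of_mem_symmList hπ
    rw [← List.append_assoc] at hsplit
    obtain ⟨hAB, hC⟩ := (cins_eq_append_cons_iff hfresh).1 hsplit
    have hπ_eq : π = A ++ (B ++ C) := by
      rw [← List.append_assoc, ← hAB, ← hC, List.take_append_drop]
    have hlen := congrArg List.length hAB
    rw [List.length_take, List.length_append] at hlen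
    refine ⟨hd, by omega, ?_⟩
    rw [show i - B.length = A.length + 1 by omega]
    symm
    refine (cins_eq_append_cons_iff hfresh).2 ⟨?_, ?_⟩ <;>
      simp only [Nat.add_sub_cancel, hπ_eq, List.take_left', List.drop_left']
  · rintro ⟨hd, hdi, rfl⟩
    exact (rightJump_cins_iff hπ (by omega)).2 ⟨hd, by omega, by rw [Nat.sub_add_cancel hdi.le]⟩

variable {L : Set (List ℕ)} {q q' : ℕ}

lemma minimalRightJump_cins (hπ : π ∈ SymmList m) (hq : 1 ≤ q) (hqq' : q < q') (hq' : q' ≤ m + 1)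
    (hgap : ∀ r, q < r → r < q' → cins r π ∉ L) :
    MinimalRightJump L (cins q π) (cins q' π) (m + 1) (q' - q) := by
  refine ⟨(rightJump_cins_iff hπ hq).2 ⟨by omega, by omega, by rw [Nat.add_sub_cancel' hqq'.le]⟩,
    fun d' ρ' hd' hj => ?_⟩
  obtain ⟨hd'0, -, rfl⟩ := (rightJump_cins_iff hπ hq).1 hj
  exact hgap _ (by omega) (by omega)

lemma minimalLeftJump_cins (hπ : π ∈ SymmList m) (hq' : 1 ≤ q') (hq'q : q' < q) (hq : q ≤ m + 1)
    (hgap : ∀ r, q' < r → r < q → cins r π ∉ L) :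
    MinimalLeftJump L (cins q π) (cins q' π) (m + 1) (q - q') := by
  refine ⟨(leftJump_cins_iff hπ (by omega) hq).2 ⟨by omega, by omega, by congr 1; omega⟩,
    fun d' ρ' hd' hj => ?_⟩
  obtain ⟨hd'0, -, rfl⟩ := (leftJump_cins_iff hπ (by omega) hq).1 hj
  exact hgap _ (by omega) (by omega)

end Jumps

section Lift

variable {L L' : Set (List ℕ)} {π ρ : List ℕ} {v w d : ℕ}

lemma MinimalRightJump.cons (hv : v < w) (hL : ∀ ρ', ρ'.Perm π → w :: ρ' ∈ L → ρ' ∈ L')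
    (h : MinimalRightJump L' π ρ v d) : MinimalRightJump L (w :: π) (w :: ρ) v d := by
  refine ⟨(rightJump_cons_iff hv).2 ⟨ρ, rfl, h.1⟩, fun d' ρ' hd' hj hmem => ?_⟩
  obtain ⟨ρ₀, rfl, hj₀⟩ := (rightJump_cons_iff hv).1 hj
  exact h.2 d' ρ₀ hd' hj₀ (hL ρ₀ hj₀.perm hmem)

lemma MinimalLeftJump.cons (hv : v < w) (hL : ∀ ρ', ρ'.Perm π → w :: ρ' ∈ L → ρ' ∈ L')
    (h : MinimalLeftJump L' π ρ v d) : MinimalLeftJump L (w :: π) (w :: ρ) v d := by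
  refine ⟨(rightJump_cons_right_iff hv).2 ⟨ρ, rfl, h.1⟩, fun d' ρ' hd' hj hmem => ?_⟩
  obtain ⟨ρ₀, rfl, hj₀⟩ := (rightJump_cons_right_iff hv).1 hj
  exact h.2 d' ρ₀ hd' hj₀ (hL ρ₀ hj₀.perm.symm hmem)

lemma MinimalRightJump.concat (hv : v < w) (hL : ∀ ρ', ρ'.Perm π → ρ' ++ [w] ∈ L → ρ' ∈ L')
    (h : MinimalRightJump L' π ρ v d) : MinimalRightJump L (π ++ [w]) (ρ ++ [w]) v d := by
  refine ⟨(rightJump_concat_iff hv).2 ⟨ρ, rfl, h.1⟩, fun d' ρ' hd' hj hmem => ?_⟩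
  obtain ⟨ρ₀, rfl, hj₀⟩ := (rightJump_concat_iff hv).1 hj
  exact h.2 d' ρ₀ hd' hj₀ (hL ρ₀ hj₀.perm hmem)

lemma MinimalLeftJump.concat (hv : v < w) (hL : ∀ ρ', ρ'.Perm π → ρ' ++ [w] ∈ L → ρ' ∈ L')
    (h : MinimalLeftJump L' π ρ v d) : MinimalLeftJump L (π ++ [w]) (ρ ++ [w]) v d := by
  refine ⟨(rightJump_concat_right_iff hv).2 ⟨ρ, rfl, h.1⟩, fun d' ρ' hd' hj hmem => ?_⟩
  obtain ⟨ρ₀, rfl, hj₀⟩ := (rightJump_concat_right_iff hv).1 hj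
  exact h.2 d' ρ₀ hd' hj₀ (hL ρ₀ hj₀.perm.symm hmem)

end Lift

section Turns

variable {l : List ℕ} {v w : ℕ}

lemma atLeftTurn_reverse_iff : AtLeftTurn l.reverse v ↔ AtRightTurn l v := by
  constructor
  · rintro ⟨A, B, hl, hA⟩
    refine ⟨B.reverse, A.reverse, by simpa using congrArg List.reverse hl, ?_⟩
    simpa [List.head?_reverse] using hA
  · rintro ⟨A, B, rfl, hB⟩
    exact ⟨B.reverse, A.reverse, by simp, by simpa [List.getLast?_reverse] using hB⟩

lemma atRightTurn_reverse_iff : AtRightTurn l.reverse v ↔ AtLeftTurn l v := by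
  rw [← atLeftTurn_reverse_iff, List.reverse_reverse]

lemma atLeftTurn_cons_iff (hv : v < w) : AtLeftTurn (w :: l) v ↔ AtLeftTurn l v := by
  constructor
  · rintro ⟨_ | ⟨a, A⟩, B, hl, hA⟩
    · simp only [List.nil_append, List.cons.injEq] at hl
      omega
    · simp only [List.cons_append, List.cons.injEq] at hl
      obtain ⟨rfl, rfl⟩ := hl
      refine ⟨A, B, rfl, ?_⟩
      rcases A with _ | ⟨b, A⟩
      · exact Or.inl rfl
      · simpa [List.getLast?_cons_cons] using hA
  · rintro ⟨A, B, rfl, hA⟩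
    refine ⟨w :: A, B, rfl, Or.inr ?_⟩
    rcases A with _ | ⟨b, A⟩
    · exact ⟨w, rfl, hv⟩
    · simpa [List.getLast?_cons_cons] using hA

lemma atRightTurn_cons_iff (hv : v < w) : AtRightTurn (w :: l) v ↔ AtRightTurn l v := by
  constructor
  · rintro ⟨_ | ⟨a, A⟩, B, hl, hB⟩
    · simp only [List.nil_append, List.cons.injEq] at hl
      omega
    · simp only [List.cons_append, List.cons.injEq] at hl
      exact ⟨A, B, hl.2, hB⟩
  · rintro ⟨A, B, rfl, hB⟩
    exact ⟨w :: A, B, rfl, hB⟩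

lemma atLeftTurn_concat_iff (hv : v < w) : AtLeftTurn (l ++ [w]) v ↔ AtLeftTurn l v := by
  rw [← atRightTurn_reverse_iff, List.reverse_concat, atRightTurn_cons_iff hv,
    atRightTurn_reverse_iff]

lemma atRightTurn_concat_iff (hv : v < w) : AtRightTurn (l ++ [w]) v ↔ AtRightTurn l v := by
  rw [← atLeftTurn_reverse_iff, List.reverse_concat, atLeftTurn_cons_iff hv,
    atLeftTurn_reverse_iff]

variable {m i : ℕ} {π : List ℕ}

lemma atLeftTurn_cins_iff (hπ : π ∈ SymmList m) (hi' : i ≤ m + 1) :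
    AtLeftTurn (cins i π) (m + 1) ↔ i ≤ 1 := by
  obtain rfl := length_eq_of_mem_symmList hπ
  constructor
  · rintro ⟨A, B, hsplit, hA⟩
    obtain ⟨rfl, -⟩ := (cins_eq_append_cons_iff (length_add_one_notMem_of_mem_symmList hπ)).1 hsplit
    rcases hA with hA | ⟨x, hx, hlt⟩
    · have := congrArg List.length hA
      simp only [List.length_take, List.length_nil] at this
      omega
    · have := le_of_mem_symmList hπ (List.mem_of_mem_take (List.mem_of_mem_getLast? hx))
      omega
  · intro hi
    exact ⟨[], π, by simp [cins, show i - 1 = 0 by omega], Or.inl rfl⟩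

lemma atRightTurn_cins_iff (hπ : π ∈ SymmList m) (hi : 1 ≤ i) :
    AtRightTurn (cins i π) (m + 1) ↔ m + 1 ≤ i := by
  obtain rfl := length_eq_of_mem_symmList hπ
  constructor
  · rintro ⟨A, B, hsplit, hB⟩
    obtain ⟨-, rfl⟩ := (cins_eq_append_cons_iff (length_add_one_notMem_of_mem_symmList hπ)).1 hsplit
    rcases hB with hB | ⟨x, hx, hlt⟩
    · have := congrArg List.length hB
      simp only [List.length_drop, List.length_nil] at this
      omega
    · have := le_of_mem_symmList hπ (List.mem_of_mem_drop (List.mem_of_mem_head? hx))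
      omega
  · intro hi'
    exact ⟨π, [], by simp [cins, List.take_of_length_le (show π.length ≤ i - 1 by omega),
      List.drop_of_length_le (show π.length ≤ i - 1 by omega)], Or.inl rfl⟩

end Turns

/-- The jump clause of `MStep`. -/
def MinimalJump (L : Set (List ℕ)) (dir : Bool) (π ρ : List ℕ) (v : ℕ) : Prop :=
  (dir = false ∧ ∃ d, MinimalLeftJump L π ρ v d) ∨ (dir = true ∧ ∃ d, MinimalRightJump L π ρ v d)

/-- The turn clause of `MStep`. -/
def AtTurn (dir : Bool) (l : List ℕ) (j : ℕ) : Prop :=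
  (dir = false ∧ AtLeftTurn l j) ∨ (dir = true ∧ AtRightTurn l j)

/-- The insertion position at which the largest value stops when sweeping in direction `dir`. -/
def endPos (N : ℕ) (dir : Bool) : ℕ := if dir then N else 1

section Directions

variable {L : Set (List ℕ)} {m v : ℕ} {dir o : Bool} {π ρ : List ℕ}

lemma MinimalJump.perm (h : MinimalJump L o π ρ v) : ρ.Perm π := by
  rcases h with ⟨-, d, h⟩ | ⟨-, d, h⟩
  exacts [h.1.perm.symm, h.1.perm]

lemma cins_endPos_eq (hπ : π.length = m) :
    cins (endPos (m + 1) dir) π = if dir then π ++ [m + 1] else (m + 1) :: π := by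
  subst hπ
  cases dir
  exacts [cins_one π, cins_length_succ π]

lemma atTurn_cins_iff (hπ : π ∈ SymmList m) {q : ℕ} (hq : 1 ≤ q) (hq' : q ≤ m + 1) :
    AtTurn dir (cins q π) (m + 1) ↔ q = endPos (m + 1) dir := by
  cases dir <;>
    simp [AtTurn, endPos, atLeftTurn_cins_iff hπ hq', atRightTurn_cins_iff hπ hq] <;> omega

lemma atTurn_cins_endPos_iff (hπ : π.length = m) (hv : v ≤ m) :
    AtTurn o (cins (endPos (m + 1) dir) π) v ↔ AtTurn o π v := by
  have hv' : v < m + 1 := by omega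
  rw [cins_endPos_eq hπ]
  cases dir <;> simp [AtTurn, atLeftTurn_cons_iff hv', atRightTurn_cons_iff hv',
    atLeftTurn_concat_iff hv', atRightTurn_concat_iff hv']

lemma MinimalJump.cins_endPos (hπ : π ∈ SymmList m) (hv : v ≤ m)
    (h : MinimalJump (pdel '' L) o π ρ v) :
    MinimalJump L o (cins (endPos (m + 1) dir) π) (cins (endPos (m + 1) dir) ρ) v := by
  have hv' : v < m + 1 := by omega
  have hρ : ρ ∈ SymmList m := h.perm.trans hπ
  have hpdel : ∀ i ρ', ρ'.Perm π → cins i ρ' ∈ L → ρ' ∈ pdel '' L := fun i ρ' hρ' hmem =>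
    ⟨_, hmem, pdel_cins_s3 (hρ'.trans hπ) i⟩
  have hcons : ∀ ρ', ρ'.Perm π → (m + 1) :: ρ' ∈ L → ρ' ∈ pdel '' L := fun ρ' hρ' hmem =>
    hpdel 1 ρ' hρ' (by rwa [cins_one, hρ'.length_eq, length_eq_of_mem_symmList hπ])
  have hconcat : ∀ ρ', ρ'.Perm π → ρ' ++ [m + 1] ∈ L → ρ' ∈ pdel '' L := fun ρ' hρ' hmem =>
    hpdel (ρ'.length + 1) ρ' hρ'
      (by rwa [cins_length_succ, hρ'.length_eq, length_eq_of_mem_symmList hπ])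
  rw [cins_endPos_eq (length_eq_of_mem_symmList hπ),
    cins_endPos_eq (length_eq_of_mem_symmList hρ)]
  rcases h with ⟨ho, d, h⟩ | ⟨ho, d, h⟩ <;> cases dir
  exacts [Or.inl ⟨ho, d, h.cons hv' hcons⟩, Or.inl ⟨ho, d, h.concat hv' hconcat⟩,
    Or.inr ⟨ho, d, h.cons hv' hcons⟩, Or.inr ⟨ho, d, h.concat hv' hconcat⟩]

end Directions

/-- The state of the run on `L_N` while the value `N`, inserted at position `q` into the
permutation of a state `τ` of the run on `p(L_N)`, sweeps in direction `dir`. -/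
def sweepState (N : ℕ) (dir : Bool) (τ : MState) (q : ℕ) : MState :=
  ⟨cins q τ.perm, Function.update τ.o N dir, Function.update τ.s N N⟩

/-- The state reached when `N` has completed its sweep: `s_N` hands control to the value that
moves next in the run on `p(L_N)`. -/
def turnState (N : ℕ) (dir : Bool) (τ : MState) (q : ℕ) : MState :=
  ⟨cins q τ.perm, Function.update τ.o N (!dir),
    Function.update (Function.update τ.s N (τ.s (N - 1))) (N - 1) (N - 1)⟩

def blockState (N : ℕ) (dir : Bool) (τ : MState) (q : ℕ) : MState :=
  if q = endPos N dir then turnState N dir τ q else sweepState N dir τ q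

lemma blockState_perm (N : ℕ) (dir : Bool) (τ : MState) (q : ℕ) :
    (blockState N dir τ q).perm = cins q τ.perm := by
  unfold blockState; split_ifs <;> rfl

section Steps

variable {L : Set (List ℕ)} {n : ℕ} {σ σ' : MState}

lemma mStep_of_atTurn (hs : σ.s n ≠ 1) (hmem : σ'.perm ∈ L)
    (hjump : MinimalJump L (σ.o (σ.s n)) σ.perm σ'.perm (σ.s n))
    (hturn : AtTurn (σ.o (σ.s n)) σ'.perm (σ.s n))
    (ho : σ'.o = Function.update σ.o (σ.s n) (!σ.o (σ.s n)))
    (hs' : σ'.s = Function.update (Function.update (Function.update σ.s n n) (σ.s n)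
      ((Function.update σ.s n n) (σ.s n - 1))) (σ.s n - 1) (σ.s n - 1)) :
    MStep L n σ σ' :=
  ⟨hs, hmem, hjump, fun _ => ⟨ho, hs'⟩, fun h => absurd hturn h⟩

lemma mStep_of_not_atTurn (hs : σ.s n ≠ 1) (hmem : σ'.perm ∈ L)
    (hjump : MinimalJump L (σ.o (σ.s n)) σ.perm σ'.perm (σ.s n))
    (hturn : ¬ AtTurn (σ.o (σ.s n)) σ'.perm (σ.s n))
    (ho : σ'.o = σ.o) (hs' : σ'.s = Function.update σ.s n n) :
    MStep L n σ σ' :=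
  ⟨hs, hmem, hjump, fun h => absurd h hturn, fun _ => ⟨ho, hs'⟩⟩


variable {m q q' : ℕ} {dir : Bool} {τ τ' : MState}

lemma mStep_sweepState (hm : 1 ≤ m) (hπ : τ.perm ∈ SymmList m)
    (hjump : MinimalJump L dir (cins q τ.perm) (cins q' τ.perm) (m + 1))
    (hq'1 : 1 ≤ q') (hq'2 : q' ≤ m + 1) (hmem : cins q' τ.perm ∈ L) :
    MStep L (m + 1) (sweepState (m + 1) dir τ q) (blockState (m + 1) dir τ q') := by
  have hturn := atTurn_cins_iff (dir := dir) hπ hq'1 hq'2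
  unfold blockState
  split_ifs with hend
  · refine mStep_of_atTurn ?_ hmem ?_ ?_ ?_ ?_ <;> simp [sweepState, turnState]
    · omega
    · exact hjump
    · exact hturn.2 hend
  · refine mStep_of_not_atTurn ?_ hmem ?_ ?_ ?_ ?_ <;> simp [sweepState]
    · omega
    · exact hjump
    · exact fun h => hend (hturn.1 h)

lemma mStep_turnState (hπ : τ.perm ∈ SymmList m) (hstep : MStep (pdel '' L) m τ τ')
    (hs : τ.s m ≤ m) (hmem : cins (endPos (m + 1) dir) τ'.perm ∈ L) :
    MStep L (m + 1) (turnState (m + 1) dir τ (endPos (m + 1) dir))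
      (sweepState (m + 1) (!dir) τ' (endPos (m + 1) dir)) := by
  obtain ⟨hs1, -, (hjump : MinimalJump _ _ _ _ _), hturn, hnoturn⟩ := hstep
  have hπ' : τ'.perm ∈ SymmList m := hjump.perm.trans hπ
  have hsN : (turnState (m + 1) dir τ (endPos (m + 1) dir)).s (m + 1) = τ.s m := by
    simp [turnState]
  have hoj : (turnState (m + 1) dir τ (endPos (m + 1) dir)).o (τ.s m) = τ.o (τ.s m) := by
    simp [turnState, show τ.s m ≠ m + 1 by omega]
  have hturn_iff := atTurn_cins_endPos_iff (o := τ.o (τ.s m)) (dir := dir)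
    (length_eq_of_mem_symmList hπ') hs
  by_cases ht : AtTurn (τ.o (τ.s m)) τ'.perm (τ.s m)
  · obtain ⟨ho, hs'⟩ := hturn ht
    refine mStep_of_atTurn ?_ hmem ?_ ?_ ?_ ?_ <;> (try rw [hsN]) <;> (try rw [hoj])
    · exact hs1
    · exact hjump.cins_endPos hπ hs
    · exact hturn_iff.2 ht
    · funext k
      simp only [sweepState, turnState, ho, Function.update_apply]
      split_ifs <;> first | rfl | omega
    · funext k
      simp only [sweepState, turnState, hs', Function.update_apply]
      split_ifs <;> first | rfl | omega
  · obtain ⟨ho, hs'⟩ := hnoturn ht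
    refine mStep_of_not_atTurn ?_ hmem ?_ ?_ ?_ ?_ <;> (try rw [hsN]) <;> (try rw [hoj])
    · exact hs1
    · exact hjump.cins_endPos hπ hs
    · exact fun h => ht (hturn_iff.1 h)
    · simp [sweepState, turnState, ho]
    · funext k
      simp only [sweepState, turnState, hs', Function.update_apply]
      split_ifs <;> first | rfl | omega

end Steps

noncomputable def insertPositions (L : Set (List ℕ)) (N : ℕ) (π : List ℕ) : List ℕ :=
  (List.range' 1 N).filter (fun i => @decide (cins i π ∈ L) (Classical.propDecidable _))

noncomputable def blockPositions (L : Set (List ℕ)) (N : ℕ) (dir : Bool) (π : List ℕ) :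
    List ℕ :=
  if dir then insertPositions L N π else (insertPositions L N π).reverse

noncomputable def block (L : Set (List ℕ)) (N : ℕ) (dir : Bool) (τ : MState) : List MState :=
  (blockPositions L N dir τ.perm).map (blockState N dir τ)

section Blocks

variable {L : Set (List ℕ)} {m N q : ℕ} {dir : Bool} {π : List ℕ} {τ : MState}

lemma cSeq_eq_map_insertPositions : cSeq L N π = (insertPositions L N π).map (cins · π) := by
  rw [cSeq, insertPositions, List.filter_map]
  rfl

lemma mem_blockPositions :
    q ∈ blockPositions L N dir π ↔ (1 ≤ q ∧ q ≤ N) ∧ cins q π ∈ L := by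
  have : q ∈ insertPositions L N π ↔ (1 ≤ q ∧ q ≤ N) ∧ cins q π ∈ L := by
    simp only [insertPositions, List.mem_filter, List.mem_range'_1, decide_eq_true_eq,
      Nat.lt_one_add_iff]
  cases dir <;> simpa [blockPositions] using this

lemma insertPositions_head? (hN : 1 ≤ N) (h : cins 1 π ∈ L) :
    (insertPositions L N π).head? = some 1 := by
  obtain ⟨N, rfl⟩ := Nat.exists_eq_add_of_le' hN
  simp [insertPositions, List.range'_succ, h]

lemma insertPositions_getLast? (hN : 1 ≤ N) (h : cins N π ∈ L) :
    (insertPositions L N π).getLast? = some N := by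
  obtain ⟨N, rfl⟩ := Nat.exists_eq_add_of_le' hN
  simp [insertPositions, List.range'_concat, List.filter_append, add_comm 1 N, h]

lemma blockPositions_head? (hN : 1 ≤ N) (h1 : cins 1 π ∈ L) (hN' : cins N π ∈ L) :
    (blockPositions L N dir π).head? = some (endPos N (!dir)) := by
  cases dir
  · simpa [blockPositions, endPos] using insertPositions_getLast? hN hN'
  · simpa [blockPositions, endPos] using insertPositions_head? hN h1

lemma blockPositions_getLast? (hN : 1 ≤ N) (h1 : cins 1 π ∈ L) (hN' : cins N π ∈ L) :
    (blockPositions L N dir π).getLast? = some (endPos N dir) := by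
  cases dir
  · simpa [blockPositions, endPos] using insertPositions_head? hN h1
  · simpa [blockPositions, endPos] using insertPositions_getLast? hN hN'

lemma isChain_insertPositions :
    (insertPositions L N π).IsChain
      (fun q q' => q < q' ∧ ∀ r, q < r → r < q' → cins r π ∉ L) :=
  ((List.isChain_cons_filter_range' _ zero_lt_one (by omega) N).tail).imp
    fun _ _ ⟨hlt, hgap⟩ => ⟨hlt, fun r h1 h2 => by simpa using hgap r h1 h2⟩

lemma isChain_blockPositions (hπ : π ∈ SymmList m) :
    (blockPositions L (m + 1) dir π).IsChain
      (fun q q' => q ≠ endPos (m + 1) dir ∧ MinimalJump L dir (cins q π) (cins q' π) (m + 1)) := by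
  have hmem : ∀ q ∈ insertPositions L (m + 1) π, 1 ≤ q ∧ q ≤ m + 1 := fun q hq =>
    (mem_blockPositions (dir := true).1 hq).1
  cases dir
  · simp only [blockPositions, Bool.false_eq_true, if_false, List.isChain_reverse]
    refine isChain_insertPositions.imp_of_mem_imp fun q q' hq hq' ⟨hlt, hgap⟩ => ?_
    have := hmem q hq
    have := hmem q' hq'
    exact ⟨by simp [endPos]; omega, Or.inl ⟨rfl, _, minimalLeftJump_cins hπ (by omega) hlt
      (by omega) hgap⟩⟩
  · simp only [blockPositions, if_true]
    refine isChain_insertPositions.imp_of_mem_imp fun q q' hq hq' ⟨hlt, hgap⟩ => ?_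
    have := hmem q hq
    have := hmem q' hq'
    exact ⟨by simp [endPos]; omega, Or.inr ⟨rfl, _, minimalRightJump_cins hπ (by omega) hlt
      (by omega) hgap⟩⟩

lemma map_perm_block :
    (block L N dir τ).map MState.perm =
      if dir then cSeq L N τ.perm else (cSeq L N τ.perm).reverse := by
  cases dir <;>
    simp [block, blockPositions, Function.comp_def, blockState_perm, cSeq_eq_map_insertPositions]

lemma perm_mem_of_mem_block {σ : MState} (hσ : σ ∈ block L N dir τ) : σ.perm ∈ L := by
  obtain ⟨q, hq, rfl⟩ := List.mem_map.1 hσ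
  rw [blockState_perm]
  exact (mem_blockPositions.1 hq).2

lemma s_le_of_mem_block (hτ : ∀ j, τ.s j ≤ j) {σ : MState} (hσ : σ ∈ block L N dir τ) :
    ∀ j, σ.s j ≤ j := by
  obtain ⟨q, -, rfl⟩ := List.mem_map.1 hσ
  intro j
  have := hτ j
  have := hτ (N - 1)
  unfold blockState
  split_ifs <;> simp only [sweepState, turnState, Function.update_apply] <;> split_ifs <;> omega

lemma block_head? (hm : 1 ≤ m) (h1 : cins 1 τ.perm ∈ L) (hN : cins (m + 1) τ.perm ∈ L) :
    (block L (m + 1) dir τ).head? = some (sweepState (m + 1) dir τ (endPos (m + 1) (!dir))) := by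
  rw [block, List.head?_map, blockPositions_head? (by omega) h1 hN, Option.map_some, blockState,
    if_neg (by cases dir <;> simp [endPos] <;> omega)]

lemma block_getLast? (h1 : cins 1 τ.perm ∈ L) (hN : cins (m + 1) τ.perm ∈ L) :
    (block L (m + 1) dir τ).getLast? = some (turnState (m + 1) dir τ (endPos (m + 1) dir)) := by
  rw [block, List.getLast?_map, blockPositions_getLast? (by omega) h1 hN, Option.map_some,
    blockState, if_pos rfl]

lemma isChain_block (hm : 1 ≤ m) (hπ : τ.perm ∈ SymmList m) :
    (block L (m + 1) dir τ).IsChain (MStep L (m + 1)) := by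
  rw [block, List.isChain_map]
  refine (isChain_blockPositions hπ).imp_of_mem_imp fun q q' _ hq' ⟨hend, hjump⟩ => ?_
  obtain ⟨⟨hq'1, hq'2⟩, hmem⟩ := mem_blockPositions.1 hq'
  rw [blockState, if_neg hend]
  exact mStep_sweepState hm hπ hjump hq'1 hq'2 hmem

end Blocks

noncomputable def liftRun (L : Set (List ℕ)) (N : ℕ) : Bool → List MState → List MState
  | _, [] => []
  | dir, τ :: ts => block L N dir τ ++ liftRun L N (!dir) ts

section LiftRun

variable {L : Set (List ℕ)} {m N : ℕ} {dir : Bool} {τ : MState} {ts : List MState}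

lemma map_perm_liftRun (k : ℕ) (ts : List MState) (hk : dir = decide (k % 2 = 1)) :
    (liftRun L N dir ts).map MState.perm =
      ((ts.map MState.perm).mapIdx fun i π =>
        if (k + i) % 2 = 0 then (cSeq L N π).reverse else cSeq L N π).flatten := by
  subst hk
  induction ts generalizing k with
  | nil => rfl
  | cons τ ts ih =>
    have hparity : (!decide (k % 2 = 1)) = decide ((k + 1) % 2 = 1) := by
      rcases Nat.mod_two_eq_zero_or_one k with h | h <;> simp [h, Nat.add_mod]
    simp only [liftRun, List.map_append, map_perm_block, List.map_cons, List.mapIdx_cons,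
      List.flatten_cons, hparity, ih (k + 1), add_zero, ← add_assoc, add_right_comm k _ 1]
    rcases Nat.mod_two_eq_zero_or_one k with h | h <;> simp [h]

lemma mem_liftRun {σ : MState} (hσ : σ ∈ liftRun L N dir ts) :
    ∃ τ ∈ ts, ∃ dir', σ ∈ block L N dir' τ := by
  induction ts generalizing dir with
  | nil => simp [liftRun] at hσ
  | cons τ ts ih =>
    rcases List.mem_append.1 hσ with h | h
    · exact ⟨τ, List.mem_cons_self, dir, h⟩
    · obtain ⟨τ', hτ', dir', h'⟩ := ih h
      exact ⟨τ', List.mem_cons_of_mem τ hτ', dir', h'⟩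

lemma liftRun_head? (hm : 1 ≤ m) (hL : IsZigzag (m + 1) L) (hτ : τ.perm ∈ pdel '' L) :
    (liftRun L (m + 1) dir (τ :: ts)).head? =
      some (sweepState (m + 1) dir τ (endPos (m + 1) (!dir))) := by
  obtain ⟨h1, hN⟩ := hL.cins_mem hτ
  simp [liftRun, block_head? hm h1 hN]

lemma liftRun_getLast? (hm : 1 ≤ m) (hL : IsZigzag (m + 1) L)
    (hts : ∀ τ ∈ ts, τ.perm ∈ pdel '' L) :
    ∀ σ ∈ (liftRun L (m + 1) dir ts).getLast?, ∃ τ ∈ ts.getLast?, σ.s (m + 1) = τ.s m := by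
  induction ts generalizing dir with
  | nil => simp [liftRun]
  | cons τ ts ih =>
    intro σ hσ
    rcases ts with _ | ⟨τ', ts⟩
    · obtain ⟨h1, hN⟩ := hL.cins_mem (hts τ List.mem_cons_self)
      simp only [liftRun, List.append_nil, block_getLast? h1 hN, Option.mem_def,
        Option.some.injEq] at hσ
      exact ⟨τ, rfl, by simp [← hσ, turnState]⟩
    · have hne : liftRun L (m + 1) (!dir) (τ' :: ts) ≠ [] := fun h => by
        simpa [h] using liftRun_head? hm hL (dir := !dir) (ts := ts) (hts τ' (by simp))
      rw [liftRun, List.getLast?_append_of_ne_nil _ hne] at hσ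
      simpa [List.getLast?_cons_cons] using
        ih (fun τ hτ => hts τ (List.mem_cons_of_mem _ hτ)) σ hσ

lemma isChain_liftRun (hm : 1 ≤ m) (hL : IsZigzag (m + 1) L)
    (hts : ∀ τ ∈ ts, τ.perm ∈ pdel '' L ∧ ∀ j, τ.s j ≤ j)
    (hchain : ts.IsChain (MStep (pdel '' L) m)) :
    (liftRun L (m + 1) dir ts).IsChain (MStep L (m + 1)) := by
  induction ts generalizing dir with
  | nil => exact List.isChain_nil
  | cons τ ts ih =>
    have hτ := hts τ List.mem_cons_self
    have hπ : τ.perm ∈ SymmList m := hL.image_pdel.subset_symmList hτ.1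
    obtain ⟨h1, hN⟩ := hL.cins_mem hτ.1
    rw [liftRun, List.isChain_append]
    refine ⟨isChain_block hm hπ, ih (fun τ hτ => hts τ (List.mem_cons_of_mem _ hτ)) hchain.tail,
      fun x hx y hy => ?_⟩
    rcases ts with _ | ⟨τ', ts⟩
    · simp [liftRun] at hy
    · have hτ' := hts τ' (by simp)
      rw [block_getLast? h1 hN, Option.mem_some_iff] at hx
      rw [liftRun_head? hm hL hτ'.1, Option.mem_some_iff, Bool.not_not] at hy
      subst hx hy
      have hend := hL.cins_mem hτ'.1
      exact mStep_turnState hπ (List.isChain_cons_cons.1 hchain).1 (hτ.2 m)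
        (by cases dir; exacts [hend.1, hend.2])

end LiftRun

noncomputable def algorithmMRun : ℕ → Set (List ℕ) → List MState
  | 0, _ => []
  | 1, _ => [MInit 1]
  | m + 2, L => liftRun L (m + 2) false (algorithmMRun (m + 1) (pdel '' L))

section AlgorithmMRun

variable {m : ℕ} {L : Set (List ℕ)}

lemma algorithmMRun_succ (hm : 1 ≤ m) :
    algorithmMRun (m + 1) L = liftRun L (m + 1) false (algorithmMRun m (pdel '' L)) := by
  obtain ⟨k, rfl⟩ := Nat.exists_eq_add_of_le' hm
  rfl

lemma sweepState_MInit : sweepState (m + 1) false (MInit m) (m + 1) = MInit (m + 1) := by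
  have hcins := cins_length_succ (idPerm m)
  rw [idPerm, List.length_range'] at hcins
  simp only [sweepState, MInit, MState.mk.injEq]
  refine ⟨?_, by simp, by simp⟩
  rw [idPerm, hcins, idPerm, List.range'_concat, Nat.one_mul, add_comm 1 m]

lemma mem_algorithmMRun (hm : 1 ≤ m) (hL : IsZigzag m L) :
    ∀ σ ∈ algorithmMRun m L, σ.perm ∈ L ∧ ∀ j, σ.s j ≤ j := by
  induction m, hm using Nat.le_induction generalizing L with
  | base => simpa [algorithmMRun, MInit, idPerm] using hL.one_mem
  | succ m hm ih =>
    intro σ hσ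
    rw [algorithmMRun_succ hm] at hσ
    obtain ⟨τ, hτ, dir, hσ⟩ := mem_liftRun hσ
    exact ⟨perm_mem_of_mem_block hσ, s_le_of_mem_block (ih hL.image_pdel τ hτ).2 hσ⟩

lemma map_perm_algorithmMRun (hm : 1 ≤ m) (hL : IsZigzag m L) :
    (algorithmMRun m L).map MState.perm = Jseq m L := by
  induction m, hm using Nat.le_induction generalizing L with
  | base => simp [algorithmMRun, MInit, idPerm, Jseq, cSeq, cins, hL.one_mem]
  | succ m hm ih =>
    rw [algorithmMRun_succ hm, map_perm_liftRun (dir := false) 0 _ rfl, ih hL.image_pdel]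
    simp [Jseq]

lemma algorithmMRun_head? (hm : 1 ≤ m) (hL : IsZigzag m L) :
    (algorithmMRun m L).head? = some (MInit m) := by
  induction m, hm using Nat.le_induction generalizing L with
  | base => rfl
  | succ m hm ih =>
    obtain ⟨ts, hts⟩ := List.head?_eq_some_iff.1 (ih hL.image_pdel)
    have hinit := (mem_algorithmMRun hm hL.image_pdel (MInit m) (by simp [hts])).1
    rw [algorithmMRun_succ hm, hts, liftRun_head? hm hL hinit]
    exact congrArg some sweepState_MInit

lemma algorithmMRun_getLast? (hm : 1 ≤ m) (hL : IsZigzag m L) :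
    ∀ σ ∈ (algorithmMRun m L).getLast?, σ.s m = 1 := by
  induction m, hm using Nat.le_induction generalizing L with
  | base => simp [algorithmMRun, MInit]
  | succ m hm ih =>
    intro σ hσ
    rw [algorithmMRun_succ hm] at hσ
    obtain ⟨τ, hτ, hs⟩ := liftRun_getLast? hm hL
      (fun τ hτ => (mem_algorithmMRun hm hL.image_pdel τ hτ).1) σ hσ
    rw [hs, ih hL.image_pdel τ hτ]

lemma isChain_algorithmMRun (hm : 1 ≤ m) (hL : IsZigzag m L) :
    (algorithmMRun m L).IsChain (MStep L m) := by
  induction m, hm using Nat.le_induction generalizing L with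
  | base => exact List.isChain_singleton _
  | succ m hm ih =>
    rw [algorithmMRun_succ hm]
    exact isChain_liftRun hm hL (mem_algorithmMRun hm hL.image_pdel) (ih hL.image_pdel)

end AlgorithmMRun

/-- For every zigzag language `L_n ⊆ S_n` with `n ≥ 1`,
Algorithm M is well defined — in every execution of step M4 the prescribed
minimal jump exists and produces a permutation of `L_n` — it terminates
(the run is a finite list of states whose last state has `s_n = 1`), and the
permutations visited in step M2, in order, form exactly the sequence `J(L_n)`
(in particular every permutation of `L_n` is visited exactly once). -/
theorem algorithmM_correct (n : ℕ) (hn : 1 ≤ n) (L : Set (List ℕ)) (hL : IsZigzag n L) :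
    ∃ run : List MState,
      run.head? = some (MInit n) ∧
      run.Chain' (MStep L n) ∧
      (∀ σ, run.getLast? = some σ → σ.s n = 1) ∧
      (∀ σ ∈ run, σ.s n ≠ 1 →
        ∃ ρ ∈ L,
          (σ.o (σ.s n) = false ∧ ∃ d, MinimalLeftJump L σ.perm ρ (σ.s n) d) ∨
          (σ.o (σ.s n) = true ∧ ∃ d, MinimalRightJump L σ.perm ρ (σ.s n) d)) ∧
      run.map MState.perm = Jseq n L := by
  have hchain := isChain_algorithmMRun hn hL
  have hlast := algorithmMRun_getLast? hn hL
  refine ⟨algorithmMRun n L, algorithmMRun_head? hn hL, hchain, hlast, fun σ hσ hs => ?_,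
    map_perm_algorithmMRun hn hL⟩
  obtain ⟨σ', hstep⟩ := hchain.exists_rel_of_getLast?_ne hσ fun h => hs (hlast σ h)
  exact ⟨σ'.perm, hstep.2.1, hstep.2.2.1⟩
end
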